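/- The cobracket δ(α_1⊗…⊗α_n) = Σ_{j=1}^{n-1} [α_{[1,j]} ⊗ α_{[j+1,n]} - (-1)^{dg(α_{[1,j]})dg(α_{[j+1,n]})} α_{[j+1,n]} ⊗ α_{[1,j]}] on the tensor space of a graded vector space satisfies the graded co-Jacobi identity: (id^{⊗3} + τ₁₂∘τ₂₃ + τ₂₃∘τ₁₂) ∘ (δ⊗id) ∘ δ = 0, where τ is the graded flip, τ₁₂ = τ⊗id, τ₂₃ = id⊗τ. -/

import Mathlib

/-- Words with letters in `ι`: homogeneous tensors `α₁ ⊗ … ⊗ αₙ`. -/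
def Word (ι : Type*) := Σ n : ℕ, Fin n → ι

noncomputable section

/-- Degree of a word: the sum of the degrees of its letters. -/
def wdeg {ι : Type*} (deg : ι → ℤ) (w : Word ι) : ℤ := ∑ i, deg (w.2 i)

/-- The first `j` letters of a word. -/
def takeW {ι : Type*} (w : Word ι) (j : ℕ) : Word ι :=
  ⟨min j w.1, fun i => w.2 (Fin.castLE (min_le_right j w.1) i)⟩

/-- The word with its first `j` letters removed. -/
def dropW {ι : Type*} (w : Word ι) (j : ℕ) : Word ι :=
  ⟨w.1 - j, fun i => w.2 ⟨j + i, by have := i.isLt; omega⟩⟩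

/-- The deconcatenation cobracket
`δ(X) = Σ_{j=1}^{n-1} (α_{[1,j]} ⊗ α_{[j+1,n]}
        - (-1)^{dg(α_{[1,j]})dg(α_{[j+1,n]})} α_{[j+1,n]} ⊗ α_{[1,j]})`. -/
def deltaW {ι : Type*} (deg : ι → ℤ) (w : Word ι) : (Word ι × Word ι) →₀ ℚ :=
  ∑ j ∈ Finset.Ico 1 w.1,
    (Finsupp.single (takeW w j, dropW w j) (1 : ℚ)
      - ((-1 : ℚ) ^ (wdeg deg (takeW w j) * wdeg deg (dropW w j))) •
          Finsupp.single (dropW w j, takeW w j) (1 : ℚ))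

/-- `δ ⊗ id` applied to a linear combination of pairs of words. -/
def deltaFstW {ι : Type*} (deg : ι → ℤ) (f : (Word ι × Word ι) →₀ ℚ) :
    (Word ι × Word ι × Word ι) →₀ ℚ :=
  f.sum fun p c =>
    c • ((deltaW deg p.1).sum fun q e => e • Finsupp.single (q.1, q.2, p.2) (1 : ℚ))

/-- `τ₁₂ = τ ⊗ id` on triples, where `τ` is the graded flip. -/
def tau12W {ι : Type*} (deg : ι → ℤ) (f : (Word ι × Word ι × Word ι) →₀ ℚ) :
    (Word ι × Word ι × Word ι) →₀ ℚ :=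
  f.sum fun t c =>
    (((-1 : ℚ) ^ (wdeg deg t.1 * wdeg deg t.2.1)) * c) •
      Finsupp.single (t.2.1, t.1, t.2.2) (1 : ℚ)

/-- `τ₂₃ = id ⊗ τ` on triples, where `τ` is the graded flip. -/
def tau23W {ι : Type*} (deg : ι → ℤ) (f : (Word ι × Word ι × Word ι) →₀ ℚ) :
    (Word ι × Word ι × Word ι) →₀ ℚ :=
  f.sum fun t c =>
    (((-1 : ℚ) ^ (wdeg deg t.2.1 * wdeg deg t.2.2)) * c) •
      Finsupp.single (t.1, t.2.2, t.2.1) (1 : ℚ)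

/-!
Expanding, `(δ ⊗ id) δ w` is a sum over the cuts of `w` into three nonempty consecutive
pieces `A · B · C`. Each cut contributes
`(1 - τ₁₂)(A ⊗ B ⊗ C) - (-1)^{|A|(|B|+|C|)} (1 - τ₁₂)(B ⊗ C ⊗ A)`:
the first part comes from applying `δ` to the left factor of `AB ⊗ C`, the second from applying
it to the left factor of the flipped term `BC ⊗ A` of `δ w`. The operator
`id + τ₁₂τ₂₃ + τ₂₃τ₁₂` is the graded sum over the cyclic permutations of the three factors, and
applied to such a contribution its twelve terms cancel in pairs.
-/

namespace Word

variable {ι : Type*}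

def toList (w : Word ι) : List ι := List.ofFn w.2

theorem toList_injective : Function.Injective (toList : Word ι → List ι) :=
  fun _ _ h => List.ofFn_inj'.mp h

@[simp]
theorem toList_takeW (w : Word ι) (j : ℕ) : (takeW w j).toList = w.toList.take j := by
  apply List.ext_getElem <;> simp [toList, takeW]

@[simp]
theorem toList_dropW (w : Word ι) (j : ℕ) : (dropW w j).toList = w.toList.drop j := by
  apply List.ext_getElem <;> simp [toList, dropW]

theorem wdeg_eq_sum_map_toList (deg : ι → ℤ) (w : Word ι) :
    wdeg deg w = (w.toList.map deg).sum := by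
  simp [wdeg, toList, List.sum_ofFn]

theorem takeW_takeW (w : Word ι) {i j : ℕ} (h : i ≤ j) : takeW (takeW w j) i = takeW w i :=
  toList_injective <| by simp [List.take_take, h]

theorem dropW_takeW (w : Word ι) (j k : ℕ) :
    dropW (takeW w k) j = takeW (dropW w j) (k - j) :=
  toList_injective <| by simp [List.drop_take]

theorem dropW_dropW (w : Word ι) (j m : ℕ) : dropW (dropW w j) m = dropW w (j + m) :=
  toList_injective <| by simp [List.drop_drop]

theorem wdeg_takeW_add_wdeg_dropW (deg : ι → ℤ) (w : Word ι) (j : ℕ) :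
    wdeg deg (takeW w j) + wdeg deg (dropW w j) = wdeg deg w := by
  simp only [wdeg_eq_sum_map_toList, toList_takeW, toList_dropW, ← List.sum_append,
    ← List.map_append, List.take_append_drop]

/-- The subword `α_{[i+1, j]}` (letters `i, …, j - 1` counted from `0`). -/
def sliceW (w : Word ι) (i j : ℕ) : Word ι := takeW (dropW w i) (j - i)

theorem wdeg_dropW_eq_wdeg_sliceW_add (deg : ι → ℤ) (w : Word ι) {i j : ℕ} (h : i ≤ j) :
    wdeg deg (dropW w i) = wdeg deg (sliceW w i j) + wdeg deg (dropW w j) := by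
  rw [sliceW, ← Nat.add_sub_cancel' h, ← dropW_dropW, Nat.add_sub_cancel_left,
    wdeg_takeW_add_wdeg_dropW]

end Word

open Word

theorem neg_one_zpow_eq_or {R : Type*} [DivisionRing R] (n : ℤ) :
    (-1 : R) ^ n = 1 ∨ (-1 : R) ^ n = -1 :=
  (Int.even_or_odd n).imp Even.neg_one_zpow Odd.neg_one_zpow

open Finset in
theorem sum_Ico_sum_Ico_sub_eq {M : Type*} [AddCommMonoid M] (n : ℕ) (g : ℕ → ℕ → M) :
    ∑ i ∈ Ico 1 n, ∑ m ∈ Ico 1 (n - i), g i (i + m) = ∑ j ∈ Ico 1 n, ∑ i ∈ Ico 1 j, g i j := by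
  calc ∑ i ∈ Ico 1 n, ∑ m ∈ Ico 1 (n - i), g i (i + m)
      = ∑ i ∈ Ico 1 n, ∑ j ∈ Ico (i + 1) n, g i j := by
        refine sum_congr rfl fun i hi => ?_
        conv_rhs => rw [← Nat.sub_add_cancel (mem_Ico.mp hi).2.le, add_comm i 1, ← sum_Ico_add']
        exact sum_congr rfl fun m _ => by rw [add_comm]
    _ = ∑ j ∈ Ico 1 n, ∑ i ∈ Ico 1 j, g i j :=
        sum_comm' fun i j => by simp only [mem_Ico]; omega

def weightedMapDomain {α R : Type*} [Semiring R] (σ : α → α) (s : α → R) :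
    (α →₀ R) →ₗ[R] (α →₀ R) :=
  Finsupp.linearCombination R fun t => Finsupp.single (σ t) (s t)

theorem weightedMapDomain_single {α R : Type*} [Semiring R] (σ : α → α) (s : α → R)
    (t : α) (c : R) :
    weightedMapDomain σ s (Finsupp.single t c) = Finsupp.single (σ t) (c * s t) := by
  rw [weightedMapDomain, Finsupp.linearCombination_single, Finsupp.smul_single, smul_eq_mul]

section Cobracket

variable {ι : Type*} (deg : ι → ℤ)

abbrev Word3 (ι : Type*) := Word ι × Word ι × Word ι

def tau12 : (Word3 ι →₀ ℚ) →ₗ[ℚ] (Word3 ι →₀ ℚ) :=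
  weightedMapDomain (fun t => (t.2.1, t.1, t.2.2)) fun t => (-1) ^ (wdeg deg t.1 * wdeg deg t.2.1)

def tau23 : (Word3 ι →₀ ℚ) →ₗ[ℚ] (Word3 ι →₀ ℚ) :=
  weightedMapDomain (fun t => (t.1, t.2.2, t.2.1)) fun t =>
    (-1) ^ (wdeg deg t.2.1 * wdeg deg t.2.2)

def deltaFst : ((Word ι × Word ι) →₀ ℚ) →ₗ[ℚ] (Word3 ι →₀ ℚ) :=
  Finsupp.linearCombination ℚ fun p =>
    Finsupp.lmapDomain ℚ ℚ (fun q : Word ι × Word ι => (q.1, q.2, p.2)) (deltaW deg p.1)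

theorem tau12W_eq : tau12W deg = tau12 deg := by
  ext1 f
  rw [tau12W, tau12, weightedMapDomain, Finsupp.linearCombination_apply]
  refine Finsupp.sum_congr fun t _ => ?_
  rw [Finsupp.smul_single_one, Finsupp.smul_single, smul_eq_mul, mul_comm]

theorem tau23W_eq : tau23W deg = tau23 deg := by
  ext1 f
  rw [tau23W, tau23, weightedMapDomain, Finsupp.linearCombination_apply]
  refine Finsupp.sum_congr fun t _ => ?_
  rw [Finsupp.smul_single_one, Finsupp.smul_single, smul_eq_mul, mul_comm]

theorem deltaFstW_eq : deltaFstW deg = deltaFst deg := by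
  ext1 f
  refine Finsupp.sum_congr fun p _ => congrArg _ ?_
  dsimp only
  rw [Finsupp.lmapDomain_apply, Finsupp.mapDomain]
  exact Finsupp.sum_congr fun q _ => Finsupp.smul_single_one _ _

def oneSubTau12 (A B C : Word ι) : Word3 ι →₀ ℚ :=
  Finsupp.single (A, B, C) 1 - ((-1 : ℚ) ^ (wdeg deg A * wdeg deg B)) • Finsupp.single (B, A, C) 1

def cutTerm (A B C : Word ι) : Word3 ι →₀ ℚ :=
  oneSubTau12 deg A B C - ((-1 : ℚ) ^ (wdeg deg A * (wdeg deg B + wdeg deg C))) •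
    oneSubTau12 deg B C A

theorem cyclicSum_cutTerm (A B C : Word ι) :
    cutTerm deg A B C + tau12 deg (tau23 deg (cutTerm deg A B C))
      + tau23 deg (tau12 deg (cutTerm deg A B C)) = 0 := by
  simp only [cutTerm, oneSubTau12, map_sub, map_smul, tau12, tau23, weightedMapDomain_single,
    mul_add, zpow_add₀ (show (-1 : ℚ) ≠ 0 by norm_num), mul_comm (wdeg deg B) (wdeg deg A),
    mul_comm (wdeg deg C) (wdeg deg A), mul_comm (wdeg deg C) (wdeg deg B)]
  rcases neg_one_zpow_eq_or (R := ℚ) (wdeg deg A * wdeg deg B) with h₁ | h₁ <;>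
  rcases neg_one_zpow_eq_or (R := ℚ) (wdeg deg A * wdeg deg C) with h₂ | h₂ <;>
  rcases neg_one_zpow_eq_or (R := ℚ) (wdeg deg B * wdeg deg C) with h₃ | h₃ <;>
  · simp only [h₁, h₂, h₃, mul_one, neg_neg, mul_neg, one_smul, neg_smul, Finsupp.single_neg]
    module

theorem deltaFst_single (v C : Word ι) (c : ℚ) :
    deltaFst deg (Finsupp.single (v, C) c)
      = c • ∑ j ∈ Finset.Ico 1 v.1, oneSubTau12 deg (takeW v j) (dropW v j) C := by
  simp only [deltaFst, Finsupp.linearCombination_single, deltaW, map_sum, map_sub, map_smul,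
    Finsupp.lmapDomain_apply, Finsupp.mapDomain_single, oneSubTau12]

theorem deltaFst_single_takeW (w C : Word ι) {j : ℕ} (hj : j ≤ w.1) :
    deltaFst deg (Finsupp.single (takeW w j, C) 1)
      = ∑ i ∈ Finset.Ico 1 j, oneSubTau12 deg (takeW w i) (sliceW w i j) C := by
  rw [deltaFst_single, one_smul, show (takeW w j).1 = j from min_eq_left hj]
  refine Finset.sum_congr rfl fun i hi => ?_
  rw [takeW_takeW w (Finset.mem_Ico.mp hi).2.le, dropW_takeW, sliceW]

theorem deltaFst_single_dropW (w C : Word ι) (j : ℕ) :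
    deltaFst deg (Finsupp.single (dropW w j, C) 1)
      = ∑ m ∈ Finset.Ico 1 (w.1 - j), oneSubTau12 deg (sliceW w j (j + m)) (dropW w (j + m)) C := by
  rw [deltaFst_single, one_smul]
  exact Finset.sum_congr rfl fun m _ => by rw [dropW_dropW, sliceW, Nat.add_sub_cancel_left]

theorem deltaFst_deltaW (w : Word ι) :
    deltaFst deg (deltaW deg w) = ∑ j ∈ Finset.Ico 1 w.1, ∑ i ∈ Finset.Ico 1 j,
      cutTerm deg (takeW w i) (sliceW w i j) (dropW w j) := by
  set flipped : ℕ → ℕ → Word3 ι →₀ ℚ := fun i j =>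
    ((-1 : ℚ) ^ (wdeg deg (takeW w i) * (wdeg deg (sliceW w i j) + wdeg deg (dropW w j)))) •
      oneSubTau12 deg (sliceW w i j) (dropW w j) (takeW w i)
  have hcut : ∀ j ∈ Finset.Ico 1 w.1,
      deltaFst deg (Finsupp.single (takeW w j, dropW w j) 1
        - ((-1 : ℚ) ^ (wdeg deg (takeW w j) * wdeg deg (dropW w j))) •
          Finsupp.single (dropW w j, takeW w j) 1)
      = ∑ i ∈ Finset.Ico 1 j, oneSubTau12 deg (takeW w i) (sliceW w i j) (dropW w j)
        - ∑ m ∈ Finset.Ico 1 (w.1 - j), flipped j (j + m) := by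
    intro j hj
    rw [map_sub, map_smul, deltaFst_single_takeW deg w _ (Finset.mem_Ico.mp hj).2.le,
      deltaFst_single_dropW, Finset.smul_sum]
    congr 1
    exact Finset.sum_congr rfl fun m _ => by
      rw [wdeg_dropW_eq_wdeg_sliceW_add deg w (Nat.le_add_right j m)]
  rw [deltaW, map_sum, Finset.sum_congr rfl hcut, Finset.sum_sub_distrib,
    sum_Ico_sum_Ico_sub_eq, ← Finset.sum_sub_distrib]
  simp only [flipped, cutTerm, Finset.sum_sub_distrib]

end Cobracket

/-- the deconcatenation cobracket satisfies the graded co-Jacobi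
identity: `(id^{⊗3} + τ₁₂∘τ₂₃ + τ₂₃∘τ₁₂) ∘ (δ⊗id) ∘ δ = 0`. -/
theorem cobracket_coJacobi {ι : Type*} (deg : ι → ℤ) (w : Word ι) :
    deltaFstW deg (deltaW deg w)
      + tau12W deg (tau23W deg (deltaFstW deg (deltaW deg w)))
      + tau23W deg (tau12W deg (deltaFstW deg (deltaW deg w))) = 0 := by
  rw [deltaFstW_eq, tau12W_eq, tau23W_eq, deltaFst_deltaW]
  simp only [map_sum, ← Finset.sum_add_distrib]
  exact Finset.sum_eq_zero fun j _ => Finset.sum_eq_zero fun i _ => cyclicSum_cutTerm deg _ _ _
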